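/- Let R be a unique factorization domain whose fraction field has characteristic different from two. Let f(x) = x² − ax + b and g(y) = y² − cy + d with a, b, c, d ∈ R, set T = R[x,y]/(f, g), and suppose f is irreducible in R[x]. Suppose e ∈ R satisfies c² − 4d = e²(a² − 4b), and let w₁, w₂ ∈ R be such that 2w₁ = c − ae and 2w₂ = c + ae. Then the minimal primes of T are exactly the two principal ideals P₁ = (h̄₁) and P₂ = (h̄₂), where h̄₁, h̄₂ are the classes in T of the linear polynomials h₁(x,y) = y − ex − w₁ and h₂(x,y) = y + ex − w₂; moreover T/Pⱼ ≅ R[x]/(f) as R-algebras for j = 1, 2. -/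

import Mathlib

open MvPolynomial

noncomputable section

/-- The ideal `(f, g) = (x² − ax + b, y² − cy + d)` in `R[x,y]`. -/
abbrev quadIdeal (R : Type) [CommRing R] (a b c d : R) : Ideal (MvPolynomial (Fin 2) R) :=
  Ideal.span {(X 0 : MvPolynomial (Fin 2) R) ^ 2 - C a * X 0 + C b,
    (X 1 : MvPolynomial (Fin 2) R) ^ 2 - C c * X 1 + C d}

/-- `T = R[x,y]/(f, g)`. -/
abbrev quadQuot (R : Type) [CommRing R] (a b c d : R) : Type :=
  MvPolynomial (Fin 2) R ⧸ quadIdeal R a b c d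

/-!
Halving the hypotheses gives `c = w₁ + w₂`, `a e = w₂ - w₁` and `d = w₁ w₂ + e² b`, hence
`g = h₁ h₂ + e² f`. So `h̄₁ h̄₂ = 0` in `T` and every prime of `T` contains `h̄₁` or `h̄₂`.
Modulo `hⱼ` the variable `y` is a linear polynomial in `x`, so `T/(h̄ⱼ) ≅ R[x]/(f)`, a domain
since `f` is prime in the UFD `R[x]`. Under this isomorphism `h̄₂ ∈ (h̄₁)` would make a
polynomial of degree `≤ 1` vanish modulo the monic quadratic `f`, which forces `h₁ = h₂`; so
the two primes are equal or incomparable, and they are the minimal primes of `T`.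
-/

theorem minimalPrimes_eq_pair {A : Type*} [CommRing A] {P Q : Ideal A} [P.IsPrime] [Q.IsPrime]
    (hmul : P * Q = ⊥) (hQP : Q ≤ P → Q = P) (hPQ : P ≤ Q → P = Q) :
    minimalPrimes A = {P, Q} := by
  have contains : ∀ J : Ideal A, J.IsPrime → P ≤ J ∨ Q ≤ J := fun J hJ =>
    hJ.mul_le.mp (hmul ▸ bot_le)
  ext I
  rw [minimalPrimes_eq_minimals, Set.mem_ofPred_eq, Set.mem_insert_iff, Set.mem_singleton_iff]
  constructor
  · intro hI
    rcases contains I hI.prop with h | h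
    · exact .inl (hI.eq_of_le ‹_› h).symm
    · exact .inr (hI.eq_of_le ‹_› h).symm
  · rintro (rfl | rfl)
    · refine ⟨‹_›, fun J hJ hJI => ?_⟩
      rcases contains J hJ with h | h
      · exact h
      · exact hQP (h.trans hJI) ▸ h
    · refine ⟨‹_›, fun J hJ hJI => ?_⟩
      rcases contains J hJ with h | h
      · exact hPQ (h.trans hJI) ▸ h
      · exact h

theorem two_ne_zero_of_ringChar_fractionRing_ne_two {R : Type*} [CommRing R] [IsDomain R]
    (h : ringChar (FractionRing R) ≠ 2) : (2 : R) ≠ 0 := fun h2 =>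
  Ring.two_ne_zero h (by rw [← map_ofNat (algebraMap R (FractionRing R)) 2, h2, map_zero])

theorem Polynomial.C_mul_X_add_C_eq_zero_iff {R : Type*} [CommRing R] {a b : R} :
    C a * X + C b = 0 ↔ a = 0 ∧ b = 0 := by
  refine ⟨fun h => ⟨?_, ?_⟩, fun ⟨ha, hb⟩ => by simp [ha, hb]⟩
  · simpa using congrArg (coeff · 1) h
  · simpa using congrArg (coeff · 0) h

section Line

variable {R : Type*} [CommRing R]

def evalLine (f : Polynomial R) (u v : R) : MvPolynomial (Fin 2) R →ₐ[R] AdjoinRoot f :=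
  aeval ![AdjoinRoot.root f, algebraMap R _ u * AdjoinRoot.root f + algebraMap R _ v]

section evalLine

variable (f : Polynomial R) (u v : R)

@[simp] theorem evalLine_X_zero : evalLine f u v (X 0) = AdjoinRoot.root f := by
  simp [evalLine]

@[simp] theorem evalLine_X_one :
    evalLine f u v (X 1) = algebraMap R _ u * AdjoinRoot.root f + algebraMap R _ v := by
  simp [evalLine]

theorem evalLine_aeval_X_zero (p : Polynomial R) :
    evalLine f u v (Polynomial.aeval (X 0) p) = AdjoinRoot.mk f p := by
  rw [← Polynomial.aeval_algHom_apply, evalLine_X_zero, AdjoinRoot.aeval_eq]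

theorem evalLine_line (s t : R) :
    evalLine f u v (X 1 - C s * X 0 - C t) =
      AdjoinRoot.mk f (Polynomial.C (u - s) * Polynomial.X + Polynomial.C (v - t)) := by
  simp only [map_sub, map_add, map_mul, evalLine_X_zero, evalLine_X_one, MvPolynomial.algHom_C,
    AdjoinRoot.mk_C, AdjoinRoot.mk_X, AdjoinRoot.algebraMap_eq]
  ring

@[simp] theorem evalLine_self : evalLine f u v (X 1 - C u * X 0 - C v) = 0 := by
  simp [evalLine_line]

theorem evalLine_line_eq_zero_iff {f : Polynomial R} (hf : f.Monic) (hdeg : 1 < f.natDegree)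
    {u v s t : R} : evalLine f u v (X 1 - C s * X 0 - C t) = 0 ↔ u = s ∧ v = t := by
  rw [evalLine_line, ← sub_eq_zero (a := u), ← sub_eq_zero (a := v),
    ← Polynomial.C_mul_X_add_C_eq_zero_iff]
  refine ⟨fun h => ?_, fun h => by rw [h, map_zero]⟩
  by_contra h0
  exact AdjoinRoot.mk_ne_zero_of_natDegree_lt hf h0
    (Polynomial.natDegree_linear_le.trans_lt hdeg) h

end evalLine

section quotLine

variable {f : Polynomial R} {u v : R} {I : Ideal (MvPolynomial (Fin 2) R)}

def quotLineHom (hI : I ≤ RingHom.ker (evalLine f u v)) :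
    ((MvPolynomial (Fin 2) R ⧸ I) ⧸
      Ideal.span {Ideal.Quotient.mk I (X 1 - C u * X 0 - C v)}) →ₐ[R] AdjoinRoot f :=
  Ideal.Quotient.liftₐ _
    (Ideal.Quotient.liftₐ I (evalLine f u v) fun _ ha => RingHom.mem_ker.mp (hI ha))
    fun _ ha => by
      obtain ⟨q, rfl⟩ := Ideal.mem_span_singleton'.mp ha
      rw [map_mul]
      exact mul_eq_zero_of_right _ (evalLine_self f u v)

@[simp] theorem quotLineHom_mk_mk (hI : I ≤ RingHom.ker (evalLine f u v))
    (p : MvPolynomial (Fin 2) R) :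
    quotLineHom hI (Ideal.Quotient.mk _ (Ideal.Quotient.mk I p)) = evalLine f u v p :=
  rfl

def quotLineEquiv (hf : Polynomial.aeval (X 0) f ∈ I) (hI : I ≤ RingHom.ker (evalLine f u v)) :
    ((MvPolynomial (Fin 2) R ⧸ I) ⧸
      Ideal.span {Ideal.Quotient.mk I (X 1 - C u * X 0 - C v)}) ≃ₐ[R] AdjoinRoot f :=
  AlgEquiv.ofAlgHom (quotLineHom hI)
    (AdjoinRoot.liftAlgHom f (Algebra.ofId R _) (Ideal.Quotient.mk _ (Ideal.Quotient.mk I (X 0)))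
      (by
        show Polynomial.aeval _ f = 0
        rw [show Ideal.Quotient.mk _ (Ideal.Quotient.mk I (X 0)) =
            ((Ideal.Quotient.mkₐ R _).comp (Ideal.Quotient.mkₐ R I)) (X 0) from rfl,
          Polynomial.aeval_algHom_apply, AlgHom.comp_apply, Ideal.Quotient.mkₐ_eq_mk,
          Ideal.Quotient.mkₐ_eq_mk, Ideal.Quotient.eq_zero_iff_mem.mpr hf, map_zero]))
    (by
      apply AdjoinRoot.algHom_ext
      simp)
    (by
      apply Ideal.Quotient.algHom_ext
      apply Ideal.Quotient.algHom_ext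
      apply MvPolynomial.algHom_ext
      intro i
      fin_cases i
      · simp
      · simp only [Fin.mk_one, AlgHom.coe_comp, Function.comp_apply, Ideal.Quotient.mkₐ_eq_mk,
          quotLineHom_mk_mk, evalLine_X_one, AdjoinRoot.algebraMap_eq, map_add, map_mul,
          AdjoinRoot.liftAlgHom_of, AdjoinRoot.liftAlgHom_root, Algebra.ofId_apply, AlgHom.id_comp]
        rw [eq_comm, ← sub_eq_zero, ← sub_sub]
        exact Ideal.Quotient.eq_zero_iff_mem.mpr (Ideal.mem_span_singleton_self _))

@[simp] theorem quotLineEquiv_mk_mk (hf : Polynomial.aeval (X 0) f ∈ I)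
    (hI : I ≤ RingHom.ker (evalLine f u v)) (p : MvPolynomial (Fin 2) R) :
    quotLineEquiv hf hI (Ideal.Quotient.mk _ (Ideal.Quotient.mk I p)) = evalLine f u v p :=
  rfl

theorem mk_mem_span_line_iff (hf : Polynomial.aeval (X 0) f ∈ I)
    (hI : I ≤ RingHom.ker (evalLine f u v)) (p : MvPolynomial (Fin 2) R) :
    Ideal.Quotient.mk I p ∈ Ideal.span {Ideal.Quotient.mk I (X 1 - C u * X 0 - C v)} ↔
      evalLine f u v p = 0 := by
  rw [← Ideal.Quotient.eq_zero_iff_mem, ← quotLineEquiv_mk_mk hf hI,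
    map_eq_zero_iff _ (quotLineEquiv hf hI).injective]

theorem span_line_isPrime (hprime : Prime f) (hf : Polynomial.aeval (X 0) f ∈ I)
    (hI : I ≤ RingHom.ker (evalLine f u v)) :
    (Ideal.span {Ideal.Quotient.mk I (X 1 - C u * X 0 - C v)}).IsPrime := by
  have := AdjoinRoot.isDomain_of_prime hprime
  exact (Ideal.Quotient.isDomain_iff_prime _).mp (quotLineEquiv hf hI).toMulEquiv.isDomain

theorem span_line_eq_of_le (hmonic : f.Monic) (hdeg : 1 < f.natDegree)
    (hf : Polynomial.aeval (X 0) f ∈ I) (hI : I ≤ RingHom.ker (evalLine f u v)) {s t : R}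
    (hle : Ideal.span {Ideal.Quotient.mk I (X 1 - C s * X 0 - C t)} ≤
      Ideal.span {Ideal.Quotient.mk I (X 1 - C u * X 0 - C v)}) :
    Ideal.span {Ideal.Quotient.mk I (X 1 - C s * X 0 - C t)} =
      Ideal.span {Ideal.Quotient.mk I (X 1 - C u * X 0 - C v)} := by
  rw [Ideal.span_singleton_le_iff_mem, mk_mem_span_line_iff hf hI,
    evalLine_line_eq_zero_iff hmonic hdeg] at hle
  rw [hle.1, hle.2]

end quotLine

end Line

section Quadratic

variable {R : Type*} [CommRing R] {a b c d e w₁ w₂ : R}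

abbrev quadPoly (a b : R) : Polynomial R :=
  Polynomial.X ^ 2 - Polynomial.C a * Polynomial.X + Polynomial.C b

theorem quadPoly_monic : (quadPoly a b).Monic := by
  unfold quadPoly
  monicity!

theorem natDegree_quadPoly [Nontrivial R] : (quadPoly a b).natDegree = 2 := by
  unfold quadPoly
  compute_degree!

theorem aeval_X_zero_quadPoly :
    Polynomial.aeval (X 0 : MvPolynomial (Fin 2) R) (quadPoly a b) = X 0 ^ 2 - C a * X 0 + C b := by
  simp

theorem quadratic_eq_mul_add (hc : c = w₁ + w₂) (hae : a * e = w₂ - w₁)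
    (hd : d = w₁ * w₂ + e ^ 2 * b) :
    (X 1 ^ 2 - C c * X 1 + C d : MvPolynomial (Fin 2) R) =
      (X 1 - C e * X 0 - C w₁) * (X 1 - C (-e) * X 0 - C w₂) +
        C (e ^ 2) * (X 0 ^ 2 - C a * X 0 + C b) := by
  have hae' : C a * C e = (C w₂ - C w₁ : MvPolynomial (Fin 2) R) := by
    rw [← map_mul, ← map_sub, hae]
  subst hc hd
  simp only [map_add, map_mul, map_pow, map_neg]
  linear_combination C e * X 0 * hae'

theorem vieta_of_discr [IsDomain R] (h2 : (2 : R) ≠ 0)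
    (he : c ^ 2 - 4 * d = e ^ 2 * (a ^ 2 - 4 * b))
    (hw₁ : 2 * w₁ = c - a * e) (hw₂ : 2 * w₂ = c + a * e) :
    c = w₁ + w₂ ∧ a * e = w₂ - w₁ ∧ d = w₁ * w₂ + e ^ 2 * b :=
  ⟨mul_left_cancel₀ h2 (by linear_combination -hw₁ - hw₂),
    mul_left_cancel₀ h2 (by linear_combination hw₁ - hw₂),
    mul_left_cancel₀ h2 <| mul_left_cancel₀ h2 <| by
      linear_combination -he - 2 * w₂ * hw₁ - (c - a * e) * hw₂⟩

end Quadratic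

section QuadIdeal

variable {R : Type} [CommRing R] {a b c d e w₁ w₂ : R}

theorem aeval_quadPoly_mem_quadIdeal :
    Polynomial.aeval (X 0) (quadPoly a b) ∈ quadIdeal R a b c d := by
  rw [aeval_X_zero_quadPoly]
  exact Ideal.subset_span (Set.mem_insert _ _)

theorem quadIdeal_le_ker_evalLine [IsDomain R] (h2 : (2 : R) ≠ 0)
    (he : c ^ 2 - 4 * d = e ^ 2 * (a ^ 2 - 4 * b))
    (hw₁ : 2 * w₁ = c - a * e) (hw₂ : 2 * w₂ = c + a * e) :
    quadIdeal R a b c d ≤ RingHom.ker (evalLine (quadPoly a b) e w₁) := by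
  obtain ⟨hc, hae, hd⟩ := vieta_of_discr h2 he hw₁ hw₂
  have hquad : evalLine (quadPoly a b) e w₁ (X 0 ^ 2 - C a * X 0 + C b) = 0 := by
    rw [← aeval_X_zero_quadPoly, evalLine_aeval_X_zero, AdjoinRoot.mk_self]
  rw [Ideal.span_le]
  rintro p (rfl | rfl)
  · exact hquad
  · rw [SetLike.mem_coe, RingHom.mem_ker, quadratic_eq_mul_add hc hae hd]
    simp [hquad]

theorem mk_line_mul_mk_line_eq_zero [IsDomain R] (h2 : (2 : R) ≠ 0)
    (he : c ^ 2 - 4 * d = e ^ 2 * (a ^ 2 - 4 * b))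
    (hw₁ : 2 * w₁ = c - a * e) (hw₂ : 2 * w₂ = c + a * e) :
    Ideal.Quotient.mk (quadIdeal R a b c d) (X 1 - C e * X 0 - C w₁) *
      Ideal.Quotient.mk (quadIdeal R a b c d) (X 1 - C (-e) * X 0 - C w₂) = 0 := by
  obtain ⟨hc, hae, hd⟩ := vieta_of_discr h2 he hw₁ hw₂
  rw [← map_mul, Ideal.Quotient.eq_zero_iff_mem,
    eq_sub_of_add_eq (quadratic_eq_mul_add hc hae hd).symm]
  exact sub_mem (Ideal.subset_span (Set.mem_insert_of_mem _ rfl))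
    (Ideal.mul_mem_left _ _ (Ideal.subset_span (Set.mem_insert _ _)))

end QuadIdeal

/-- Let `R` be a UFD whose fraction field has characteristic `≠ 2`, let
`f(x) = x² − ax + b` and `g(y) = y² − cy + d`, set `T = R[x,y]/(f, g)`, and suppose
`f` is irreducible in `R[x]`.  Suppose `e ∈ R` satisfies `c² − 4d = e²(a² − 4b)` and
`w₁, w₂ ∈ R` satisfy `2w₁ = c − ae`, `2w₂ = c + ae`.  Then the minimal primes of `T`
are exactly the principal ideals `P₁ = (h̄₁)`, `P₂ = (h̄₂)` generated by the classes
of `h₁ = y − ex − w₁` and `h₂ = y + ex − w₂`, and `T/Pⱼ ≅ R[x]/(f)` as `R`-algebras. -/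
theorem stmt9 (R : Type) [CommRing R] [IsDomain R] [UniqueFactorizationMonoid R]
    (hchar : ringChar (FractionRing R) ≠ 2)
    (a b c d : R)
    (hf : Irreducible (Polynomial.X ^ 2 - Polynomial.C a * Polynomial.X +
      Polynomial.C b : Polynomial R))
    (e w₁ w₂ : R)
    (he : c ^ 2 - 4 * d = e ^ 2 * (a ^ 2 - 4 * b))
    (hw₁ : 2 * w₁ = c - a * e) (hw₂ : 2 * w₂ = c + a * e) :
    minimalPrimes (quadQuot R a b c d) =
      { Ideal.span {Ideal.Quotient.mk (quadIdeal R a b c d)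
          (X 1 - C e * X 0 - C w₁)},
        Ideal.span {Ideal.Quotient.mk (quadIdeal R a b c d)
          (X 1 + C e * X 0 - C w₂)} } ∧
    Nonempty ((quadQuot R a b c d ⧸
        (Ideal.span {Ideal.Quotient.mk (quadIdeal R a b c d)
          (X 1 - C e * X 0 - C w₁)} : Ideal (quadQuot R a b c d))) ≃ₐ[R]
      AdjoinRoot (Polynomial.X ^ 2 - Polynomial.C a * Polynomial.X +
        Polynomial.C b : Polynomial R)) ∧
    Nonempty ((quadQuot R a b c d ⧸
        (Ideal.span {Ideal.Quotient.mk (quadIdeal R a b c d)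
          (X 1 + C e * X 0 - C w₂)} : Ideal (quadQuot R a b c d))) ≃ₐ[R]
      AdjoinRoot (Polynomial.X ^ 2 - Polynomial.C a * Polynomial.X +
        Polynomial.C b : Polynomial R)) := by
  have h2 := two_ne_zero_of_ringChar_fractionRing_ne_two hchar
  have hdeg : 1 < (quadPoly a b).natDegree := by rw [natDegree_quadPoly]; norm_num
  have hF : Polynomial.aeval (X 0) (quadPoly a b) ∈ quadIdeal R a b c d :=
    aeval_quadPoly_mem_quadIdeal
  have hI₁ : quadIdeal R a b c d ≤ RingHom.ker (evalLine (quadPoly a b) e w₁) :=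
    quadIdeal_le_ker_evalLine h2 he hw₁ hw₂
  have hI₂ : quadIdeal R a b c d ≤ RingHom.ker (evalLine (quadPoly a b) (-e) w₂) :=
    quadIdeal_le_ker_evalLine h2 (by rwa [neg_sq]) (by rw [hw₂]; ring) (by rw [hw₁]; ring)
  have := span_line_isPrime hf.prime hF hI₁
  have := span_line_isPrime hf.prime hF hI₂
  rw [show (X 1 + C e * X 0 - C w₂ : MvPolynomial (Fin 2) R) = X 1 - C (-e) * X 0 - C w₂ by
    rw [map_neg]; ring]
  refine ⟨minimalPrimes_eq_pair ?_ (span_line_eq_of_le quadPoly_monic hdeg hF hI₁)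
    (span_line_eq_of_le quadPoly_monic hdeg hF hI₂),
    ⟨quotLineEquiv hF hI₁⟩, ⟨quotLineEquiv hF hI₂⟩⟩
  rw [Ideal.span_singleton_mul_span_singleton, mk_line_mul_mk_line_eq_zero h2 he hw₁ hw₂,
    Ideal.span_singleton_eq_bot.mpr rfl]
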